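/- arXiv:2502.02932 — 11 statements merged into one kernel-verified Lean document; each statement's English description precedes it below -/
import Mathlib

section
/- Let (X,d) be a metric space, let α > 1 be a real number, and let x_p, x_e, x, m ∈ X. Assume d(x, x_p) ≥ α·d(x, x_e), that m lies on a geodesic from x_e to x in the sense that d(x_e, m) + d(m, x) = d(x_e, x), and that m ≠ x. Then d(m, x_p) > α·d(m, x_e). -/
/-- In a metric space, if `d(x, x_p) ≥ α·d(x, x_e)` with `α > 1`, and `m` lies
on a geodesic from `x_e` to `x` (i.e. `d(x_e, m) + d(m, x) = d(x_e, x)`) with `m ≠ x`, then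
`d(m, x_p) > α·d(m, x_e)`. -/
theorem stmt0 {X : Type*} [MetricSpace X] {α : ℝ} (hα : 1 < α)
    (x_p x_e x m : X)
    (hx : α * dist x x_e ≤ dist x x_p)
    (hm : dist x_e m + dist m x = dist x_e x)
    (hne : m ≠ x) :
    α * dist m x_e < dist m x_p := by
  have hmx : 0 < dist m x := dist_pos.mpr hne
  calc α * dist m x_e = α * dist x x_e - α * dist m x := by
        rw [dist_comm m x_e, dist_comm x x_e, ← hm]; ring
    _ ≤ dist x x_p - α * dist m x := by gcongr
    _ ≤ dist m x + dist m x_p - α * dist m x := by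
        gcongr; exact dist_triangle_left x x_p m
    _ < dist m x_p := by linarith [mul_lt_mul_of_pos_right hα hmx]
end

section
/- Let α > 1 and l ≥ 0 be real numbers and let x_p, x_e ∈ ℝ² (the Euclidean plane) with ‖x_p − x_e‖ > l. Let x₁, x₂ ∈ ℝ² lie on the Cartesian oval {x : ‖x − x_p‖ − α‖x − x_e‖ = l}, i.e. ‖x_i − x_p‖ = α‖x_i − x_e‖ + l for i = 1,2. Then ⟨x₁ − x_p, x₂ − x_p⟩/(‖x₁ − x_p‖·‖x₂ − x_p‖) ≥ ⟨x₁ − x_e, x₂ − x_e⟩/(‖x₁ − x_e‖·‖x₂ − x_e‖); that is, the angle subtended by x₁ and x₂ at x_p is at most the angle subtended at x_e. -/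
/-!
By the law of cosines, the cosine of the angle subtended by `x₁, x₂` at a point `z` is
`(r₁² + r₂² - d²) / (2 r₁ r₂)` with `rᵢ = ‖xᵢ - z‖` and `d = ‖x₁ - x₂‖`. On the oval the distances
`aᵢ` to `x_p` are the affine images `α bᵢ + l` of the distances `bᵢ` to `x_e`, and the
cross-multiplied difference of the two cosines is twice
`(d² - α² (b₁ - b₂)²) (a₁ a₂ - b₁ b₂) + (α² - 1) (b₁ - b₂)² a₁ a₂`.
Both terms are nonnegative: the first by the triangle inequality `|a₁ - a₂| ≤ d` at `x_p`,
since `a₁ - a₂ = α (b₁ - b₂)`, and the second because `α ≥ 1`.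
-/

open scoped RealInnerProductSpace

noncomputable def cosOfSides (a b c : ℝ) : ℝ := (a ^ 2 + b ^ 2 - c ^ 2) / (2 * a * b)

theorem real_inner_div_norm_mul_norm_eq_cosOfSides {F : Type*} [NormedAddCommGroup F]
    [InnerProductSpace ℝ F] (x y : F) :
    ⟪x, y⟫ / (‖x‖ * ‖y‖) = cosOfSides ‖x‖ ‖y‖ ‖x - y‖ := by
  rw [cosOfSides, norm_sub_sq_real, mul_assoc, ← div_div]
  ring_nf

theorem cosOfSides_le_of_eq_mul_add {α l a₁ a₂ b₁ b₂ d : ℝ} (hα : 1 ≤ α) (hl : 0 ≤ l)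
    (hb₁ : 0 < b₁) (hb₂ : 0 < b₂) (ha₁ : a₁ = α * b₁ + l) (ha₂ : a₂ = α * b₂ + l)
    (hd : |a₁ - a₂| ≤ d) :
    cosOfSides b₁ b₂ d ≤ cosOfSides a₁ a₂ d := by
  have hba₁ : b₁ ≤ a₁ := by nlinarith
  have hba₂ : b₂ ≤ a₂ := by nlinarith
  have ha₁pos : 0 < a₁ := hb₁.trans_le hba₁
  have ha₂pos : 0 < a₂ := hb₂.trans_le hba₂
  have hprod : b₁ * b₂ ≤ a₁ * a₂ := mul_le_mul hba₁ hba₂ hb₂.le ha₁pos.le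
  have hsq : (α * (b₁ - b₂)) ^ 2 ≤ d ^ 2 := by
    obtain ⟨hlo, hhi⟩ := abs_le.mp hd
    exact sq_le_sq' (by linarith) (by linarith)
  have hkey : (a₁ ^ 2 + a₂ ^ 2 - d ^ 2) * (2 * b₁ * b₂) - (b₁ ^ 2 + b₂ ^ 2 - d ^ 2) * (2 * a₁ * a₂)
      = 2 * ((d ^ 2 - (α * (b₁ - b₂)) ^ 2) * (a₁ * a₂ - b₁ * b₂)
        + (α ^ 2 - 1) * (b₁ - b₂) ^ 2 * (a₁ * a₂)) := by
    subst ha₁ ha₂; ring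
  have hα2 : 0 ≤ α ^ 2 - 1 := by nlinarith
  rw [cosOfSides, cosOfSides, div_le_div_iff₀ (by positivity) (by positivity)]
  linarith [mul_nonneg (sub_nonneg.mpr hsq) (sub_nonneg.mpr hprod),
    mul_nonneg (mul_nonneg hα2 (sq_nonneg (b₁ - b₂))) (mul_pos ha₁pos ha₂pos).le]

theorem norm_sub_pos_of_norm_sub_eq_mul_add {E : Type*} [NormedAddCommGroup E] {α l : ℝ}
    {p e x : E} (hpe : l < ‖p - e‖) (h : ‖x - p‖ = α * ‖x - e‖ + l) : 0 < ‖x - e‖ := by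
  refine norm_pos_iff.mpr fun hxe => hpe.ne' ?_
  rw [sub_eq_zero.mp hxe, sub_self, norm_zero, mul_zero, zero_add, norm_sub_rev] at h
  exact h

/-- For `α > 1`, `l ≥ 0`, pursuer/evader positions `x_p, x_e ∈ ℝ²` with
`‖x_p − x_e‖ > l`, and points `x₁, x₂` on the Cartesian oval
`{x : ‖x − x_p‖ = α‖x − x_e‖ + l}`, the cosine of the angle subtended by `x₁, x₂` at `x_p`
is at least the cosine of the angle subtended at `x_e`. -/
theorem stmt1 (α l : ℝ) (hα : 1 < α) (hl : 0 ≤ l)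
    (x_p x_e x₁ x₂ : EuclideanSpace ℝ (Fin 2))
    (hpe : l < ‖x_p - x_e‖)
    (h₁ : ‖x₁ - x_p‖ = α * ‖x₁ - x_e‖ + l)
    (h₂ : ‖x₂ - x_p‖ = α * ‖x₂ - x_e‖ + l) :
    ⟪x₁ - x_e, x₂ - x_e⟫ / (‖x₁ - x_e‖ * ‖x₂ - x_e‖) ≤
      ⟪x₁ - x_p, x₂ - x_p⟫ / (‖x₁ - x_p‖ * ‖x₂ - x_p‖) := by
  have htri : |‖x₁ - x_p‖ - ‖x₂ - x_p‖| ≤ ‖x₁ - x₂‖ := by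
    simpa only [sub_sub_sub_cancel_right] using abs_norm_sub_norm_le (x₁ - x_p) (x₂ - x_p)
  rw [real_inner_div_norm_mul_norm_eq_cosOfSides, real_inner_div_norm_mul_norm_eq_cosOfSides,
    sub_sub_sub_cancel_right, sub_sub_sub_cancel_right]
  exact cosOfSides_le_of_eq_mul_add hα.le hl (norm_sub_pos_of_norm_sub_eq_mul_add hpe h₁)
    (norm_sub_pos_of_norm_sub_eq_mul_add hpe h₂) h₁ h₂ htri
end

section
/- Let α > 1 and 0 ≤ l < σ be real numbers, let r₂ ∈ [(σ−l)/(α+1), (σ−l)/(α−1)], and set r₁ = α·r₂ + l. Define f₁ = α·r₁²·r₂ − 2·r₁·r₂² + α·r₂³ − α·σ²·r₂ and f₂ = r₁³ − 2α·r₁²·r₂ + r₁·r₂² − σ²·r₁. Then f₂ < 0, f₁ + f₂ < 0, and f₁ − f₂ > 0; in particular |f₁| < |f₂|. -/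
/-!
On the oval, `r₁ - r₂ = (α - 1) r₂ + l ≥ 0` and the interval condition on `r₂` is exactly the
triangle inequality `r₁ - r₂ ≤ σ ≤ r₁ + r₂` for the triangle `x, x_p, x_e`. The three signs are then
read off from the identities
* `f₂ = r₁ ((r₁ - r₂)² - σ² - 2 (α - 1) r₁ r₂)`,
* `f₁ + f₂ = l (r₁ - r₂)(r₁ + r₂) - σ² (r₁ + α r₂)`, where `l (r₁ - r₂) ≤ σ²`,
* `f₁ - f₂ = 2 (α - 1) r₁ r₂ (r₁ + r₂) + l (σ² - (r₁ - r₂)²)`.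
-/

namespace CartesianOval

/-- Numerator of `dψ/dχ` along the oval. -/
def angleRatioNum (α σ r₁ r₂ : ℝ) : ℝ :=
  α * r₁ ^ 2 * r₂ - 2 * r₁ * r₂ ^ 2 + α * r₂ ^ 3 - α * σ ^ 2 * r₂

/-- Denominator of `dψ/dχ` along the oval. -/
def angleRatioDen (α σ r₁ r₂ : ℝ) : ℝ :=
  r₁ ^ 3 - 2 * α * r₁ ^ 2 * r₂ + r₁ * r₂ ^ 2 - σ ^ 2 * r₁

variable {α l σ r₁ r₂ : ℝ}

theorem angleRatioDen_eq (α σ r₁ r₂ : ℝ) :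
    angleRatioDen α σ r₁ r₂ = r₁ * ((r₁ - r₂) ^ 2 - σ ^ 2 - 2 * (α - 1) * r₁ * r₂) := by
  unfold angleRatioDen; ring

theorem angleRatioNum_add_angleRatioDen (hr₁ : r₁ = α * r₂ + l) :
    angleRatioNum α σ r₁ r₂ + angleRatioDen α σ r₁ r₂
      = l * (r₁ - r₂) * (r₁ + r₂) - σ ^ 2 * (r₁ + α * r₂) := by
  subst hr₁; unfold angleRatioNum angleRatioDen; ring

theorem angleRatioNum_sub_angleRatioDen (hr₁ : r₁ = α * r₂ + l) :
    angleRatioNum α σ r₁ r₂ - angleRatioDen α σ r₁ r₂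
      = 2 * (α - 1) * r₁ * r₂ * (r₁ + r₂) + l * (σ ^ 2 - (r₁ - r₂) ^ 2) := by
  subst hr₁; unfold angleRatioNum angleRatioDen; ring

theorem triangle_of_mem_Icc (hα : 1 < α) (hr₁ : r₁ = α * r₂ + l)
    (hr₂ : r₂ ∈ Set.Icc ((σ - l) / (α + 1)) ((σ - l) / (α - 1))) :
    σ ≤ r₁ + r₂ ∧ r₁ - r₂ ≤ σ := by
  obtain ⟨hlow, hupp⟩ := hr₂
  rw [div_le_iff₀ (by linarith)] at hlow
  rw [le_div_iff₀ (by linarith)] at hupp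
  constructor <;> linarith

theorem sub_nonneg_of_oval (hα : 1 < α) (hl : 0 ≤ l) (hr₂ : 0 < r₂)
    (hr₁ : r₁ = α * r₂ + l) : 0 ≤ r₁ - r₂ := by
  nlinarith

theorem sq_sub_le_sq_of_oval (hα : 1 < α) (hl : 0 ≤ l) (hr₂ : 0 < r₂)
    (hr₁ : r₁ = α * r₂ + l) (hdist : r₁ - r₂ ≤ σ) : (r₁ - r₂) ^ 2 ≤ σ ^ 2 :=
  pow_le_pow_left₀ (sub_nonneg_of_oval hα hl hr₂ hr₁) hdist 2

theorem angleRatioDen_neg (hα : 1 < α) (hl : 0 ≤ l) (hr₂ : 0 < r₂)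
    (hr₁ : r₁ = α * r₂ + l) (hdist : r₁ - r₂ ≤ σ) : angleRatioDen α σ r₁ r₂ < 0 := by
  have hr₁pos : 0 < r₁ := by nlinarith
  have hsq := sq_sub_le_sq_of_oval hα hl hr₂ hr₁ hdist
  have hturn : 0 < 2 * (α - 1) * r₁ * r₂ := by
    have : 0 < α - 1 := by linarith
    positivity
  rw [angleRatioDen_eq]
  exact mul_neg_of_pos_of_neg hr₁pos (by linarith)

theorem angleRatioNum_add_angleRatioDen_neg (hα : 1 < α) (hl : 0 ≤ l) (hlσ : l < σ)
    (hr₂ : 0 < r₂) (hr₁ : r₁ = α * r₂ + l) (hdist : r₁ - r₂ ≤ σ) :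
    angleRatioNum α σ r₁ r₂ + angleRatioDen α σ r₁ r₂ < 0 := by
  have hsub := sub_nonneg_of_oval hα hl hr₂ hr₁
  have hσ : 0 < σ := by linarith
  have hprod : l * (r₁ - r₂) ≤ σ ^ 2 := by
    rw [sq]; exact mul_le_mul hlσ.le hdist hsub hσ.le
  have hsum : 0 ≤ r₁ + r₂ := by linarith
  have hgap : 0 < σ ^ 2 * ((α - 1) * r₂) := by
    have : 0 < α - 1 := by linarith
    positivity
  rw [angleRatioNum_add_angleRatioDen hr₁, sub_neg]
  calc l * (r₁ - r₂) * (r₁ + r₂)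
      ≤ σ ^ 2 * (r₁ + r₂) := mul_le_mul_of_nonneg_right hprod hsum
    _ < σ ^ 2 * (r₁ + α * r₂) := by linarith

theorem angleRatioNum_sub_angleRatioDen_pos (hα : 1 < α) (hl : 0 ≤ l) (hr₂ : 0 < r₂)
    (hr₁ : r₁ = α * r₂ + l) (hdist : r₁ - r₂ ≤ σ) :
    0 < angleRatioNum α σ r₁ r₂ - angleRatioDen α σ r₁ r₂ := by
  have hr₁pos : 0 < r₁ := by nlinarith
  have hsq := sq_sub_le_sq_of_oval hα hl hr₂ hr₁ hdist
  have hα' : 0 < α - 1 := by linarith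
  rw [angleRatioNum_sub_angleRatioDen hr₁]
  exact add_pos_of_pos_of_nonneg (by positivity) (mul_nonneg hl (by linarith))

end CartesianOval

open CartesianOval in
/-- With `α > 1`, `0 ≤ l < σ`, `r₂ ∈ [(σ−l)/(α+1), (σ−l)/(α−1)]`,
`r₁ = α r₂ + l`, `f₁ = α r₁² r₂ − 2 r₁ r₂² + α r₂³ − α σ² r₂` and
`f₂ = r₁³ − 2α r₁² r₂ + r₁ r₂² − σ² r₁`, one has `f₂ < 0`, `f₁ + f₂ < 0`, `f₁ − f₂ > 0`,
and in particular `|f₁| < |f₂|`. -/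
theorem stmt2 (α l σ r₁ r₂ f₁ f₂ : ℝ) (hα : 1 < α) (hl : 0 ≤ l) (hσ : l < σ)
    (hr₂ : r₂ ∈ Set.Icc ((σ - l) / (α + 1)) ((σ - l) / (α - 1)))
    (hr₁ : r₁ = α * r₂ + l)
    (hf₁ : f₁ = α * r₁ ^ 2 * r₂ - 2 * r₁ * r₂ ^ 2 + α * r₂ ^ 3 - α * σ ^ 2 * r₂)
    (hf₂ : f₂ = r₁ ^ 3 - 2 * α * r₁ ^ 2 * r₂ + r₁ * r₂ ^ 2 - σ ^ 2 * r₁) :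
    f₂ < 0 ∧ f₁ + f₂ < 0 ∧ 0 < f₁ - f₂ ∧ |f₁| < |f₂| := by
  obtain ⟨hfar, hdist⟩ := triangle_of_mem_Icc hα hr₁ hr₂
  have hr₂pos : 0 < r₂ := by nlinarith
  have hden : f₂ < 0 := hf₂ ▸ angleRatioDen_neg hα hl hr₂pos hr₁ hdist
  have hadd : f₁ + f₂ < 0 :=
    hf₁ ▸ hf₂ ▸ angleRatioNum_add_angleRatioDen_neg hα hl hσ hr₂pos hr₁ hdist
  have hsub : 0 < f₁ - f₂ :=
    hf₁ ▸ hf₂ ▸ angleRatioNum_sub_angleRatioDen_pos hα hl hr₂pos hr₁ hdist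
  refine ⟨hden, hadd, hsub, ?_⟩
  rw [abs_of_neg hden, abs_lt]
  constructor <;> linarith
end

section
/- Let α > 1 and let P, E, C ∈ ℝ² be pairwise distinct points with ‖C − P‖ ≥ α·‖C − E‖. Then α·⟨E − P, C − P⟩/(‖E − P‖·‖C − P‖) + ⟨P − E, C − E⟩/(‖P − E‖·‖C − E‖) ≥ α − 1. Equivalently, writing ψ for the angle at P between C − P and E − P and χ for the angle at E between C − E and P − E, one has −α·cos ψ − cos χ ≤ 1 − α. -/
/-!
Write `a = |PE|`, `b = |CP|`, `c = |CE|`. The projection formula in the triangle `PEC` gives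
`b cos ψ + c cos χ = a`, so `b (α cos ψ + cos χ) = α a + (b - α c) cos χ`. Since `b - α c ≥ 0`
and `cos χ ≥ -1`, this is at least `α (a + c) - b`, which by the triangle inequality `b ≤ a + c`
is at least `(α - 1) b`.
-/

open scoped RealInnerProductSpace
open Real EuclideanGeometry InnerProductGeometry

section

variable {V Pt : Type*} [NormedAddCommGroup V] [InnerProductSpace ℝ V] [MetricSpace Pt]
  [NormedAddTorsor V Pt]

theorem inner_vsub_vsub_add_inner_vsub_vsub (p₁ p₂ p₃ : Pt) :
    ⟪p₂ -ᵥ p₁, p₃ -ᵥ p₁⟫ + ⟪p₁ -ᵥ p₂, p₃ -ᵥ p₂⟫ = dist p₁ p₂ ^ 2 := by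
  rw [← vsub_add_vsub_cancel p₃ p₂ p₁, ← neg_vsub_eq_vsub_rev p₂ p₁, inner_add_right,
    inner_neg_left, real_inner_self_eq_norm_sq, dist_comm, dist_eq_norm_vsub V]
  ring

theorem dist_mul_cos_angle_add_dist_mul_cos_angle {p₁ p₂ : Pt} (p₃ : Pt) (h : p₁ ≠ p₂) :
    dist p₃ p₁ * cos (∠ p₂ p₁ p₃) + dist p₃ p₂ * cos (∠ p₁ p₂ p₃) = dist p₁ p₂ := by
  refine mul_left_cancel₀ (dist_ne_zero.2 h) ?_
  have key := inner_vsub_vsub_add_inner_vsub_vsub p₁ p₂ p₃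
  simp only [← cos_angle_mul_norm_mul_norm, ← dist_eq_norm_vsub V, dist_comm p₂ p₁] at key
  unfold EuclideanGeometry.angle
  linear_combination key

theorem sub_one_le_mul_cos_angle_add_cos_angle {α : ℝ} {P E C : Pt} (hα : 0 < α) (hPE : P ≠ E)
    (h : α * dist C E ≤ dist C P) :
    α - 1 ≤ α * cos (∠ E P C) + cos (∠ P E C) := by
  have hproj := dist_mul_cos_angle_add_dist_mul_cos_angle C hPE
  have hPE_le : dist P E ≤ dist C P + dist C E := by
    linarith [dist_triangle P C E, dist_comm P C]
  have hCP_le : dist C P ≤ dist P E + dist C E := by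
    linarith [dist_triangle C E P, dist_comm E P]
  have hCP : 0 < dist C P := by nlinarith [dist_pos.2 hPE]
  have hcos : -1 ≤ cos (∠ P E C) := neg_one_le_cos _
  refine le_of_mul_le_mul_left ?_ hCP
  calc dist C P * (α - 1) ≤ α * (dist P E + dist C E) - dist C P := by
        linarith [mul_le_mul_of_nonneg_left hCP_le hα.le]
    _ ≤ α * dist P E + cos (∠ P E C) * (dist C P - α * dist C E) := by
        linarith [mul_le_mul_of_nonneg_right hcos (sub_nonneg.2 h)]
    _ = dist C P * (α * cos (∠ E P C) + cos (∠ P E C)) := by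
        linear_combination (-α) * hproj

end

theorem stmt3_general (α : ℝ) (hα : 1 < α) (P E C : EuclideanSpace ℝ (Fin 2))
    (hPE : P ≠ E)
    (h : α * ‖C - E‖ ≤ ‖C - P‖) :
    α - 1 ≤ α * (⟪E - P, C - P⟫ / (‖E - P‖ * ‖C - P‖)) +
      ⟪P - E, C - E⟫ / (‖P - E‖ * ‖C - E‖) := by
  have := sub_one_le_mul_cos_angle_add_cos_angle (zero_lt_one.trans hα) hPE
    (by rwa [dist_eq_norm, dist_eq_norm])
  simpa only [EuclideanGeometry.angle, vsub_eq_sub, cos_angle] using this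

/-- For `α > 1` and pairwise distinct `P, E, C ∈ ℝ²` with `‖C − P‖ ≥ α‖C − E‖`,
`α·cos ψ + cos χ ≥ α − 1`, where `ψ` is the angle at `P` between `C − P` and `E − P` and `χ`
is the angle at `E` between `C − E` and `P − E`. -/
theorem stmt3 (α : ℝ) (hα : 1 < α) (P E C : EuclideanSpace ℝ (Fin 2))
    (hPE : P ≠ E) (hPC : P ≠ C) (hEC : E ≠ C)
    (h : α * ‖C - E‖ ≤ ‖C - P‖) :
    α - 1 ≤ α * (⟪E - P, C - P⟫ / (‖E - P‖ * ‖C - P‖)) +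
      ⟪P - E, C - E⟫ / (‖P - E‖ * ‖C - E‖) :=
  stmt3_general α hα P E C hPE h
end

section
/- Let α > 1 and define f(χ) = −α·√(1 − sin²χ/α²) − cos χ. Then f is strictly increasing on the interval [0, π], and consequently f(χ) ≤ f(π) = 1 − α for every χ ∈ [0, π]. -/
/-! Since `α² (1 - sin²χ / α²) = α² - 1 + cos²χ`, the function is `-(g (cos χ))` with
`g c = √(α² - 1 + c²) + c`, and `cos` is strictly decreasing on `[0, π]`. For `a > 0` the map
`c ↦ √(a + c²) + c` is strictly increasing: `s(c) = √(a + c²)` satisfies `s(c₂)² - s(c₁)² = c₂² - c₁²`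
and `s(c₁) + s(c₂) > |c₁ + c₂|`, so `s` varies strictly slower than `c`. At `χ = π` one gets `-(√(α²) - 1) = 1 - α`. -/

open Real

lemma mul_sqrt_one_sub_sin_sq_div_sq {α : ℝ} (hα : 0 < α) (χ : ℝ) :
    α * √(1 - sin χ ^ 2 / α ^ 2) = √(α ^ 2 - 1 + cos χ ^ 2) := by
  have h : α ^ 2 * (1 - sin χ ^ 2 / α ^ 2) = α ^ 2 - 1 + cos χ ^ 2 := by
    field_simp
    linarith [sin_sq_add_cos_sq χ]
  rw [← h, sqrt_mul (sq_nonneg α), sqrt_sq hα.le]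

lemma strictMono_sqrt_add_sq_add {a : ℝ} (ha : 0 < a) :
    StrictMono fun c : ℝ => √(a + c ^ 2) + c := by
  intro c₁ c₂ hc
  have hsq (c : ℝ) : √(a + c ^ 2) ^ 2 = a + c ^ 2 := sq_sqrt (by positivity)
  have hpos (c : ℝ) : 0 < √(a + c ^ 2) + c := by
    nlinarith [sqrt_nonneg (a + c ^ 2), hsq c]
  by_contra! hle
  have hs : √(a + c₂ ^ 2) - √(a + c₁ ^ 2) ≤ -(c₂ - c₁) := by linarith
  -- With `sᵢ = √(a + cᵢ²)`, `s₂² - s₁² = c₂² - c₁²` together with `hs` gives `(s₁ + c₁) + (s₂ + c₂) ≤ 0`.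
  nlinarith [hsq c₁, hsq c₂, hpos c₁, hpos c₂,
    mul_le_mul_of_nonneg_right hs (add_nonneg (sqrt_nonneg (a + c₁ ^ 2)) (sqrt_nonneg (a + c₂ ^ 2)))]

/-- For `α > 1`, the function `f(χ) = −α·√(1 − sin²χ/α²) − cos χ` is strictly
increasing on `[0, π]`, `f(π) = 1 − α`, and consequently `f(χ) ≤ 1 − α` on `[0, π]`. -/
theorem stmt4 (α : ℝ) (hα : 1 < α) :
    StrictMonoOn (fun χ : ℝ => -α * Real.sqrt (1 - Real.sin χ ^ 2 / α ^ 2) - Real.cos χ)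
      (Set.Icc 0 Real.pi) ∧
    (-α * Real.sqrt (1 - Real.sin Real.pi ^ 2 / α ^ 2) - Real.cos Real.pi) = 1 - α ∧
    ∀ χ ∈ Set.Icc 0 Real.pi,
      -α * Real.sqrt (1 - Real.sin χ ^ 2 / α ^ 2) - Real.cos χ ≤ 1 - α := by
  have hα₀ : 0 < α := one_pos.trans hα
  have hf : (fun χ : ℝ => -α * √(1 - sin χ ^ 2 / α ^ 2) - cos χ)
      = fun χ => -(√(α ^ 2 - 1 + cos χ ^ 2) + cos χ) := by
    funext χ
    rw [neg_mul, mul_sqrt_one_sub_sin_sq_div_sq hα₀]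
    ring
  have hmono : StrictMonoOn (fun χ : ℝ => -α * √(1 - sin χ ^ 2 / α ^ 2) - cos χ)
      (Set.Icc 0 π) := by
    rw [hf]
    exact ((strictMono_sqrt_add_sq_add (by nlinarith)).comp_strictAntiOn strictAntiOn_cos).neg
  have hπ : -α * √(1 - sin π ^ 2 / α ^ 2) - cos π = 1 - α := by
    rw [neg_mul, mul_sqrt_one_sub_sin_sq_div_sq hα₀, cos_pi]
    norm_num [sqrt_sq hα₀.le]
    ring
  refine ⟨hmono, hπ, fun χ hχ => hπ ▸ hmono.monotoneOn hχ ?_ hχ.2⟩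
  exact ⟨pi_pos.le, le_rfl⟩
end

section
/- Let α > 1 and let P, E, C ∈ ℝ² be pairwise distinct with ‖C − P‖ ≥ α·‖C − E‖. Let cos ψ = ⟨E − P, C − P⟩/(‖E − P‖·‖C − P‖) and cos χ = ⟨P − E, C − E⟩/(‖P − E‖·‖C − E‖). Then the angle ψ is acute and cos ψ ≥ √(1 − (1 − cos²χ)/α²) = √(1 − sin²χ/α²) ≥ √(1 − 1/α²) > 0. -/
open scoped RealInnerProductSpace

/-!
The side `CE` is at most the side `CP`, so by the law of cosines the angle `ψ` at `P` is acute,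
and `cos ψ = √(1 - sin² ψ)`. The law of sines turns `α ‖C - E‖ ≤ ‖C - P‖` into
`α sin ψ ≤ sin χ`, which gives the first bound; the others follow from `sin² χ ≤ 1 < α²`.
-/

namespace EuclideanGeometry

open Real

variable {V P : Type*} [NormedAddCommGroup V] [InnerProductSpace ℝ V] [MetricSpace P]
  [NormedAddTorsor V P] {p₁ p₂ p₃ : P}

theorem cos_angle_pos_of_dist_le (h₁₂ : p₁ ≠ p₂) (h : dist p₃ p₁ ≤ dist p₃ p₂) :
    0 < cos (∠ p₁ p₂ p₃) := by
  have hcos := law_cos p₁ p₂ p₃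
  have hd₁₂ : 0 < dist p₁ p₂ := dist_pos.2 h₁₂
  rw [dist_comm p₁ p₃] at hcos
  have hprod : 0 < dist p₁ p₂ * (dist p₃ p₂ * cos (∠ p₁ p₂ p₃)) := by
    nlinarith [dist_nonneg (x := p₃) (y := p₁)]
  exact pos_of_mul_pos_right (pos_of_mul_pos_right hprod hd₁₂.le) dist_nonneg

theorem mul_sin_angle_le_sin_angle {α : ℝ} (hα : 0 < α) (h₁₂ : p₁ ≠ p₂)
    (h : α * dist p₃ p₁ ≤ dist p₃ p₂) :
    α * sin (∠ p₁ p₂ p₃) ≤ sin (∠ p₂ p₁ p₃) := by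
  have h₃₂ : 0 < dist p₃ p₂ := by
    refine lt_of_le_of_ne dist_nonneg fun h₃₂ ↦ h₁₂ ?_
    have : dist p₃ p₁ = 0 := by nlinarith [dist_nonneg (x := p₃) (y := p₁)]
    rw [dist_eq_zero] at this
    rw [eq_comm, dist_eq_zero] at h₃₂
    rw [← this, h₃₂]
  have hsin : sin (∠ p₁ p₂ p₃) * dist p₂ p₃ = sin (∠ p₂ p₁ p₃) * dist p₃ p₁ := by
    rw [law_sin, angle_comm]
  rw [dist_comm p₂ p₃] at hsin
  have hsin_nonneg : 0 ≤ sin (∠ p₂ p₁ p₃) := InnerProductGeometry.sin_angle_nonneg _ _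
  refine le_of_mul_le_mul_right ?_ h₃₂
  calc α * sin (∠ p₁ p₂ p₃) * dist p₃ p₂ = sin (∠ p₂ p₁ p₃) * (α * dist p₃ p₁) := by
        rw [mul_assoc, hsin]; ring
    _ ≤ sin (∠ p₂ p₁ p₃) * dist p₃ p₂ := by gcongr

theorem sqrt_one_sub_sin_sq_div_sq_le_cos_angle {α : ℝ} (hα : 1 ≤ α) (h₁₂ : p₁ ≠ p₂)
    (h : α * dist p₃ p₁ ≤ dist p₃ p₂) :
    √(1 - sin (∠ p₂ p₁ p₃) ^ 2 / α ^ 2) ≤ cos (∠ p₁ p₂ p₃) := by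
  have hcos := cos_angle_pos_of_dist_le h₁₂ (le_trans (le_mul_of_one_le_left dist_nonneg hα) h)
  have hsin := mul_sin_angle_le_sin_angle (by linarith) h₁₂ h
  have hsin_nonneg : 0 ≤ sin (∠ p₁ p₂ p₃) := InnerProductGeometry.sin_angle_nonneg _ _
  rw [← abs_of_pos hcos, ← sqrt_sq_eq_abs, cos_sq']
  gcongr
  rw [le_div_iff₀ (by positivity), ← mul_pow, mul_comm]
  gcongr

end EuclideanGeometry

open EuclideanGeometry Real

theorem stmt5_general (α : ℝ) (hα : 1 < α) (P E C : EuclideanSpace ℝ (Fin 2))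
    (hPE : P ≠ E)
    (h : α * ‖C - E‖ ≤ ‖C - P‖) :
    Real.sqrt (1 - (1 - (⟪P - E, C - E⟫ / (‖P - E‖ * ‖C - E‖)) ^ 2) / α ^ 2) ≤
        ⟪E - P, C - P⟫ / (‖E - P‖ * ‖C - P‖) ∧
    Real.sqrt (1 - 1 / α ^ 2) ≤
        Real.sqrt (1 - (1 - (⟪P - E, C - E⟫ / (‖P - E‖ * ‖C - E‖)) ^ 2) / α ^ 2) ∧
    0 < Real.sqrt (1 - 1 / α ^ 2) := by
  have hψ : ⟪E - P, C - P⟫ / (‖E - P‖ * ‖C - P‖) = cos (∠ E P C) :=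
    (InnerProductGeometry.cos_angle _ _).symm
  have hχ : 1 - (⟪P - E, C - E⟫ / (‖P - E‖ * ‖C - E‖)) ^ 2 = sin (∠ P E C) ^ 2 := by
    rw [sin_sq, ← InnerProductGeometry.cos_angle]; rfl
  have hα₂ : 1 / α ^ 2 < 1 := (div_lt_one (by positivity)).2 (one_lt_pow₀ hα two_ne_zero)
  rw [hψ, hχ]
  refine ⟨sqrt_one_sub_sin_sq_div_sq_le_cos_angle hα.le hPE.symm ?_, ?_, sqrt_pos.2 (by linarith)⟩
  · simpa only [dist_eq_norm] using h
  · gcongr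
    exact sin_sq_le_one _

/-- For `α > 1` and pairwise distinct `P, E, C ∈ ℝ²` with `‖C − P‖ ≥ α‖C − E‖`,
writing `cos ψ` and `cos χ` for the cosines of the interior angles at `P` and at `E`, one has
`cos ψ ≥ √(1 − (1 − cos²χ)/α²) ≥ √(1 − 1/α²) > 0`; in particular `ψ` is acute. -/
theorem stmt5 (α : ℝ) (hα : 1 < α) (P E C : EuclideanSpace ℝ (Fin 2))
    (hPE : P ≠ E) (hPC : P ≠ C) (hEC : E ≠ C)
    (h : α * ‖C - E‖ ≤ ‖C - P‖) :
    Real.sqrt (1 - (1 - (⟪P - E, C - E⟫ / (‖P - E‖ * ‖C - E‖)) ^ 2) / α ^ 2) ≤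
        ⟪E - P, C - P⟫ / (‖E - P‖ * ‖C - P‖) ∧
    Real.sqrt (1 - 1 / α ^ 2) ≤
        Real.sqrt (1 - (1 - (⟪P - E, C - E⟫ / (‖P - E‖ * ‖C - E‖)) ^ 2) / α ^ 2) ∧
    0 < Real.sqrt (1 - 1 / α ^ 2) :=
  stmt5_general α hα P E C hPE h
end

section
/- Consider the obstacle-free pursuit–evasion game in ℝ² with speed ratio α > 1, capture radius l ≥ 0, and initial positions x_p0, x_e0 with ‖x_p0 − x_e0‖ > l. Define the evader's reachable region R_e as the set of points x ∈ ℝ² such that there exists an evader control u_e with the property that for every pursuer control u_p there is a time t ∈ [0, t_f(u_p, u_e)) with x_e(t) = x. Then R_e = D_l(x_p0, x_e0) = {x ∈ ℝ² : ‖x − x_p0‖ − α·‖x − x_e0‖ > l}. -/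
/-!
If `‖x - x_p0‖ ≤ α ‖x - x_e0‖ + l`, the pursuer, knowing the evader's control, computes the
first time `t₀ ≥ ‖x - x_e0‖` at which the evader visits `x`; it can be within `l` of `x` at
time `t₀` (heading straight at `x`, with an out-and-back detour if it would arrive early), so
capture happens no later than any visit. Conversely, if `‖x - x_p0‖ - α ‖x - x_e0‖ > l`, the
evader runs straight to `x`: the triangle inequality keeps the distance between the players
above `l` up to and slightly beyond the arrival time `‖x - x_e0‖`.
-/

open MeasureTheory
open scoped ENNReal RealInnerProductSpace

noncomputable section

/-- The Euclidean plane. -/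
abbrev Pt := EuclideanSpace ℝ (Fin 2)

/-- A function is piecewise continuous if on every compact interval it is continuous
except at finitely many points. -/
def PiecewiseContinuous (u : ℝ → Pt) : Prop :=
  ∀ a b : ℝ, ∃ s : Finset ℝ, ∀ t ∈ Set.Icc a b, t ∉ s → ContinuousAt u t

/-- A control: a piecewise continuous function with `‖u t‖ = 1` for all `t ≥ 0`. -/
def IsControl (u : ℝ → Pt) : Prop :=
  PiecewiseContinuous u ∧ ∀ t : ℝ, 0 ≤ t → ‖u t‖ = 1

/-- The trajectory from `x₀` at speed `v` under control `u`:
`x(t) = x₀ + v·∫₀ᵗ u(s) ds`. -/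
def traj (x₀ : Pt) (v : ℝ) (u : ℝ → Pt) (t : ℝ) : Pt :=
  x₀ + v • ∫ s in (0:ℝ)..t, u s

/-- Capture time with capture radius `l`: `inf {t ≥ 0 : ‖x_p(t) − x_e(t)‖ ≤ l}`,
with `inf ∅ = +∞` (valued in `ℝ≥0∞`). -/
def captureTime (l : ℝ) (xp xe : ℝ → Pt) : ℝ≥0∞ :=
  ⨅ t ∈ {t : ℝ | 0 ≤ t ∧ ‖xp t - xe t‖ ≤ l}, ENNReal.ofReal t

/-- A strategy `δ` is non-anticipative if, for every `t' > 0`, whenever two evader controls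
agree almost everywhere on `[0, t']`, the corresponding pursuer controls agree almost
everywhere on `[0, t']`. -/
def Nonanticipative (δ : (ℝ → Pt) → (ℝ → Pt)) : Prop :=
  ∀ t' : ℝ, 0 < t' → ∀ u u' : ℝ → Pt,
    (∀ᵐ t ∂(volume.restrict (Set.Icc (0:ℝ) t')), u t = u' t) →
    (∀ᵐ t ∂(volume.restrict (Set.Icc (0:ℝ) t')), δ u t = δ u' t)

open Set

lemma exists_unit_eq_add_smul {E : Type*} [NormedAddCommGroup E] [NormedSpace ℝ E]
    [Nontrivial E] (y z : E) : ∃ e : E, ‖e‖ = 1 ∧ z = y + ‖z - y‖ • e := by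
  rcases eq_or_ne z y with rfl | hzy
  · obtain ⟨e, he⟩ := exists_norm_eq E zero_le_one
    exact ⟨e, he, by simp⟩
  · have hpos : 0 < ‖z - y‖ := norm_pos_iff.2 (sub_ne_zero.2 hzy)
    refine ⟨‖z - y‖⁻¹ • (z - y), ?_, ?_⟩
    · rw [norm_smul, norm_inv, norm_norm, inv_mul_cancel₀ hpos.ne']
    · rw [smul_smul, mul_inv_cancel₀ hpos.ne', one_smul, add_sub_cancel]

lemma intervalIntegral.integral_switch {E : Type*} [NormedAddCommGroup E] [NormedSpace ℝ E]
    [CompleteSpace E]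
    (e₁ e₂ : E) {s t : ℝ} (hs : 0 ≤ s) (hst : s ≤ t) :
    ∫ r in (0:ℝ)..t, (if r < s then e₁ else e₂) = s • e₁ + (t - s) • e₂ := by
  have h₁ : EqOn (fun r => if r < s then e₁ else e₂) (fun _ => e₁) (uIoo 0 s) := by
    intro r hr
    rw [uIoo_of_le hs] at hr
    exact if_pos hr.2
  have h₂ : EqOn (fun r => if r < s then e₁ else e₂) (fun _ => e₂) (uIoo s t) := by
    intro r hr
    rw [uIoo_of_le hst] at hr
    exact if_neg (not_lt.2 hr.1.le)
  rw [← intervalIntegral.integral_add_adjacent_intervals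
      (intervalIntegrable_const.congr_uIoo h₁.symm) (intervalIntegrable_const.congr_uIoo h₂.symm),
    intervalIntegral.integral_congr_uIoo h₁, intervalIntegral.integral_congr_uIoo h₂,
    intervalIntegral.integral_const, intervalIntegral.integral_const, sub_zero]

lemma isControl_const {e : Pt} (he : ‖e‖ = 1) : IsControl (fun _ => e) :=
  ⟨fun _ _ => ⟨∅, fun _ _ _ => continuousAt_const⟩, fun _ _ => he⟩

lemma isControl_switch {e₁ e₂ : Pt} (he₁ : ‖e₁‖ = 1) (he₂ : ‖e₂‖ = 1) (s : ℝ) :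
    IsControl (fun t => if t < s then e₁ else e₂) := by
  refine ⟨fun _ _ => ⟨{s}, fun t _ hts => ?_⟩, fun t _ => by dsimp only; split_ifs <;> assumption⟩
  rcases lt_or_gt_of_ne (Finset.notMem_singleton.1 hts) with h | h
  · exact continuousAt_const.congr <| by
      filter_upwards [Iio_mem_nhds h] with r hr using (if_pos hr).symm
  · exact continuousAt_const.congr <| by
      filter_upwards [Ioi_mem_nhds h] with r hr using (if_neg (not_lt.2 hr.le)).symm

namespace IsControl

variable {u : ℝ → Pt}

lemma intervalIntegrable (hu : IsControl u) {a b : ℝ} (ha : 0 ≤ a) (hb : 0 ≤ b) :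
    IntervalIntegrable u volume a b := by
  obtain ⟨s, hs⟩ := hu.1 (a ⊓ b) (a ⊔ b)
  have hmeas : AEStronglyMeasurable u (volume.restrict (uIcc a b)) := by
    have hcont : ContinuousOn u (uIcc a b \ s) := fun t ht =>
      (hs t ht.1 ht.2).continuousWithinAt
    rw [← Measure.restrict_congr_set (sdiff_null_ae_eq_self (s.finite_toSet.measure_zero _))]
    exact hcont.aestronglyMeasurable (measurableSet_uIcc.diff s.finite_toSet.measurableSet)
  refine intervalIntegrable_iff.2 <|
    Integrable.mono' (integrableOn_const (C := (1 : ℝ)) measure_Ioc_lt_top.ne)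
      (hmeas.mono_measure (Measure.restrict_mono uIoc_subset_uIcc le_rfl)) ?_
  filter_upwards [ae_restrict_mem measurableSet_uIoc] with t ht
  exact (hu.2 t ((le_min ha hb).trans ht.1.le)).le

lemma lipschitzOnWith_traj (hu : IsControl u) (x₀ : Pt) (v : ℝ) :
    LipschitzOnWith ‖v‖₊ (traj x₀ v u) (Ici 0) := by
  refine LipschitzOnWith.of_dist_le_mul fun s hs t ht => ?_
  have hint : ‖∫ r in t..s, u r‖ ≤ 1 * |s - t| :=
    intervalIntegral.norm_integral_le_of_norm_le_const fun r hr =>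
      (hu.2 r ((le_min (mem_Ici.1 ht) (mem_Ici.1 hs)).trans hr.1.le)).le
  rw [dist_eq_norm, traj, traj, add_sub_add_left_eq_sub, ← smul_sub,
    intervalIntegral.integral_interval_sub_left (hu.intervalIntegrable le_rfl hs)
      (hu.intervalIntegrable le_rfl ht), norm_smul, Real.dist_eq, coe_nnnorm]
  exact mul_le_mul_of_nonneg_left (by rwa [one_mul] at hint) (norm_nonneg v)

lemma dist_traj_le (hu : IsControl u) (x₀ : Pt) (v : ℝ) {t : ℝ} (ht : 0 ≤ t) :
    dist (traj x₀ v u t) x₀ ≤ |v| * t := by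
  simpa [traj, abs_of_nonneg ht] using
    (hu.lipschitzOnWith_traj x₀ v).dist_le_mul t ht 0 self_mem_Ici

end IsControl

lemma traj_const (x₀ : Pt) (v : ℝ) (e : Pt) (t : ℝ) :
    traj x₀ v (fun _ => e) t = x₀ + (v * t) • e := by
  simp [traj, intervalIntegral.integral_const, smul_smul]

lemma exists_isLeast_hitting_time {u : ℝ → Pt} (hu : IsControl u) (x₀ : Pt) (v : ℝ) {x : Pt}
    (hx : ∃ t, 0 ≤ t ∧ traj x₀ v u t = x) :
    ∃ t₀, IsLeast {t | 0 ≤ t ∧ traj x₀ v u t = x} t₀ := by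
  have hclosed : IsClosed {t | 0 ≤ t ∧ traj x₀ v u t = x} :=
    (hu.lipschitzOnWith_traj x₀ v).continuousOn.preimage_isClosed_of_isClosed isClosed_Ici
      isClosed_singleton
  exact ⟨_, hclosed.isLeast_csInf hx ⟨0, fun t ht => ht.1⟩⟩

lemma captureTime_le_ofReal {l : ℝ} {xp xe : ℝ → Pt} {t : ℝ} (ht : 0 ≤ t)
    (h : ‖xp t - xe t‖ ≤ l) : captureTime l xp xe ≤ ENNReal.ofReal t :=
  iInf₂_le t ⟨ht, h⟩

lemma ofReal_le_captureTime {l : ℝ} {xp xe : ℝ → Pt} {τ : ℝ}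
    (h : ∀ t, 0 ≤ t → ‖xp t - xe t‖ ≤ l → τ ≤ t) : ENNReal.ofReal τ ≤ captureTime l xp xe :=
  le_iInf₂ fun t ht => ENNReal.ofReal_le_ofReal (h t ht.1 ht.2)

lemma exists_control_traj_eq {x₀ x : Pt} {v t : ℝ} (hv : 0 < v) (h : ‖x - x₀‖ ≤ v * t) :
    ∃ u, IsControl u ∧ traj x₀ v u t = x := by
  obtain ⟨e, he, hx⟩ := exists_unit_eq_add_smul x₀ x
  set d := ‖x - x₀‖
  have hdt : d / v ≤ t := (div_le_iff₀' hv).2 h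
  have hd : 0 ≤ d / v := by positivity
  -- out along `e` until `s`, back until `t`: net displacement `(2 s - t) • e = (d / v) • e`
  set s := (t + d / v) / 2 with hs
  refine ⟨fun r => if r < s then e else -e, isControl_switch he (by rwa [norm_neg]) s, ?_⟩
  rw [traj, intervalIntegral.integral_switch e (-e) (by linarith) (by linarith), smul_neg,
    ← sub_eq_add_neg, ← sub_smul, show s - (t - s) = d / v by ring, smul_smul,
    mul_div_cancel₀ _ hv.ne', ← hx]

lemma exists_control_norm_traj_sub_le {x₀ x : Pt} {v t l : ℝ} (hv : 0 < v) (hl : 0 ≤ l)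
    (h : ‖x - x₀‖ ≤ v * t + l) : ∃ u, IsControl u ∧ ‖traj x₀ v u t - x‖ ≤ l := by
  rcases le_or_gt ‖x - x₀‖ (v * t) with hnear | hfar
  · obtain ⟨u, hu, hux⟩ := exists_control_traj_eq hv hnear
    exact ⟨u, hu, by rwa [hux, sub_self, norm_zero]⟩
  · obtain ⟨e, he, hx⟩ := exists_unit_eq_add_smul x₀ x
    refine ⟨fun _ => e, isControl_const he, ?_⟩
    rw [traj_const, hx, add_sub_add_left_eq_sub, ← sub_smul, norm_smul, he, mul_one,
      Real.norm_eq_abs, abs_of_neg (by linarith)]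
    linarith

lemma exists_control_capture_before_visits {α l : ℝ} (hα : 0 < α) (hl : 0 ≤ l)
    {x_p0 x_e0 x : Pt} {u_e : ℝ → Pt} (hue : IsControl u_e)
    (hx : ‖x - x_p0‖ ≤ α * ‖x - x_e0‖ + l) (hvisit : ∃ t, 0 ≤ t ∧ traj x_e0 1 u_e t = x) :
    ∃ u_p, IsControl u_p ∧ ∀ t, 0 ≤ t → traj x_e0 1 u_e t = x →
      captureTime l (traj x_p0 α u_p) (traj x_e0 1 u_e) ≤ ENNReal.ofReal t := by
  obtain ⟨t₀, ⟨ht₀, hxt₀⟩, hfirst⟩ := exists_isLeast_hitting_time hue x_e0 1 hvisit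
  have hdist : ‖x - x_e0‖ ≤ t₀ := by
    simpa [hxt₀, dist_eq_norm] using hue.dist_traj_le x_e0 1 ht₀
  obtain ⟨u_p, hup, hclose⟩ := exists_control_norm_traj_sub_le (x₀ := x_p0) (x := x) (t := t₀)
    hα hl (by nlinarith)
  exact ⟨u_p, hup, fun t ht hxt => (captureTime_le_ofReal ht₀ (by rwa [hxt₀])).trans
    (ENNReal.ofReal_le_ofReal (hfirst ⟨ht, hxt⟩))⟩

lemma ofReal_lt_captureTime_traj_const {α l : ℝ} (hα : 1 ≤ α) {x_p0 x_e0 x e : Pt}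
    (hx : x = x_e0 + ‖x - x_e0‖ • e) (he : ‖e‖ = 1)
    (hdom : l < ‖x - x_p0‖ - α * ‖x - x_e0‖) {u_p : ℝ → Pt} (hup : IsControl u_p) :
    ENNReal.ofReal ‖x - x_e0‖ < captureTime l (traj x_p0 α u_p) (traj x_e0 1 (fun _ => e)) := by
  set T := ‖x - x_e0‖
  set D := ‖x - x_p0‖
  set ε := (D - α * T - l) / (1 + α)
  have hT : 0 ≤ T := norm_nonneg _
  have hε : 0 < ε := div_pos (by linarith) (by linarith)
  refine ((ENNReal.ofReal_lt_ofReal_iff (by linarith)).2 (lt_add_of_pos_right T hε)).trans_le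
    (ofReal_le_captureTime fun t ht hcap => ?_)
  by_contra! hlt
  have hevader : dist x (traj x_e0 1 (fun _ => e) t) = |t - T| := by
    rw [dist_eq_norm, traj_const, hx, add_sub_add_left_eq_sub, ← sub_smul, norm_smul, he,
      mul_one, Real.norm_eq_abs, one_mul, abs_sub_comm]
  set xp := traj x_p0 α u_p t
  set xe := traj x_e0 1 (fun _ => e) t
  have hpursuer : dist xp x_p0 ≤ α * t := by
    simpa [abs_of_pos (zero_lt_one.trans_le hα)] using hup.dist_traj_le x_p0 α ht
  have htriangle : D ≤ dist x xe + dist xp xe + dist xp x_p0 := by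
    simpa only [dist_comm xe xp, dist_eq_norm] using dist_triangle4 x xe xp x_p0
  have hfar : |t - T| + α * t < D - l := by
    rcases le_or_gt t T with hbefore | hafter
    · rw [abs_of_nonpos (by linarith)]
      nlinarith
    · rw [abs_of_pos (by linarith)]
      have := (lt_div_iff₀ (by linarith)).1 (show t - T < ε by linarith)
      linarith
  rw [dist_eq_norm xp] at htriangle
  linarith

theorem stmt7_general (α l : ℝ) (hα : 1 < α) (hl : 0 ≤ l) (x_p0 x_e0 : Pt) :
    {x : Pt | ∃ u_e : ℝ → Pt, IsControl u_e ∧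
        ∀ u_p : ℝ → Pt, IsControl u_p →
          ∃ t : ℝ, 0 ≤ t ∧
            ENNReal.ofReal t < captureTime l (traj x_p0 α u_p) (traj x_e0 1 u_e) ∧
            traj x_e0 1 u_e t = x} =
      {x : Pt | l < ‖x - x_p0‖ - α * ‖x - x_e0‖} := by
  ext x
  simp only [Set.mem_ofPred_eq]
  constructor
  · rintro ⟨u_e, hue, hreach⟩
    by_contra! hx
    -- played against any pursuer control, here `u_e` itself, the evader visits `x`
    have hvisit : ∃ t, 0 ≤ t ∧ traj x_e0 1 u_e t = x :=
      let ⟨t, ht, _, hxt⟩ := hreach u_e hue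
      ⟨t, ht, hxt⟩
    obtain ⟨u_p, hup, hcapture⟩ := exists_control_capture_before_visits (x_p0 := x_p0)
      (zero_lt_one.trans hα) hl hue (by linarith) hvisit
    obtain ⟨t, ht, hlt, hxt⟩ := hreach u_p hup
    exact (hlt.trans_le (hcapture t ht hxt)).false
  · intro hx
    obtain ⟨e, he, hxe⟩ := exists_unit_eq_add_smul x_e0 x
    refine ⟨fun _ => e, isControl_const he, fun u_p hup => ⟨‖x - x_e0‖, norm_nonneg _,
      ofReal_lt_captureTime_traj_const hα.le hxe he hx hup, ?_⟩⟩
    rw [traj_const, one_mul, ← hxe]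

/-- In the obstacle-free game with speed ratio `α > 1`, capture radius `l ≥ 0`
and `‖x_p0 − x_e0‖ > l`, the evader's reachable region — the set of points `x` for which
some evader control reaches `x` before capture against every pursuer control — equals the
evader's dominance region `D_l(x_p0, x_e0) = {x : ‖x − x_p0‖ − α‖x − x_e0‖ > l}`. -/
theorem stmt7 (α l : ℝ) (hα : 1 < α) (hl : 0 ≤ l) (x_p0 x_e0 : Pt)
    (h0 : l < ‖x_p0 - x_e0‖) :
    {x : Pt | ∃ u_e : ℝ → Pt, IsControl u_e ∧
        ∀ u_p : ℝ → Pt, IsControl u_p →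
          ∃ t : ℝ, 0 ≤ t ∧
            ENNReal.ofReal t < captureTime l (traj x_p0 α u_p) (traj x_e0 1 u_e) ∧
            traj x_e0 1 u_e t = x} =
      {x : Pt | l < ‖x - x_p0‖ - α * ‖x - x_e0‖} :=
  stmt7_general α l hα hl x_p0 x_e0

end
end

section
/- Let α > 1 and let x_p, x_e, x ∈ ℝ² with x_p ≠ x_e and ‖x − x_p‖ ≥ α·‖x − x_e‖ (i.e. x lies in the closure of the Apollonius region A(x_p, x_e)). Then every point x' = x_e + s·(x − x_e) with s ∈ [0, 1) satisfies ‖x' − x_p‖ > α·‖x' − x_e‖. -/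
/-! If `x` lies on or outside the Apollonius circle, `‖x - p‖ ≥ α‖x - e‖`, then moving from `x`
to `x' = e + s (x - e)` lowers the distance to `p` by at most `(1 - s)‖x - e‖`, so
`‖x' - p‖ ≥ (α - 1 + s)‖x - e‖`, which exceeds `α‖x' - e‖ = α s ‖x - e‖` by
`(α - 1)(1 - s)‖x - e‖ > 0`. In the degenerate case `x = e` the point `x'` is `e ≠ p`. -/

section Apollonius

variable {E : Type*} [NormedAddCommGroup E] [NormedSpace ℝ E]

lemma norm_homothety_sub_center {e x : E} {s : ℝ} (hs : 0 ≤ s) :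
    ‖(e + s • (x - e)) - e‖ = s * ‖x - e‖ := by
  rw [add_sub_cancel_left, norm_smul, Real.norm_of_nonneg hs]

lemma norm_sub_sub_mul_le_norm_homothety_sub {p e x : E} {s : ℝ} (hs : s ≤ 1) :
    ‖x - p‖ - (1 - s) * ‖x - e‖ ≤ ‖(e + s • (x - e)) - p‖ := by
  have hstep : x - (e + s • (x - e)) = (1 - s) • (x - e) := by module
  have hdist : ‖x - (e + s • (x - e))‖ = (1 - s) * ‖x - e‖ := by
    rw [hstep, norm_smul, Real.norm_of_nonneg (sub_nonneg.mpr hs)]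
  linarith [norm_sub_le_norm_sub_add_norm_sub x (e + s • (x - e)) p]

theorem mul_norm_homothety_sub_lt {α s : ℝ} {p e x : E} (hα : 1 < α) (hpe : p ≠ e)
    (hx : α * ‖x - e‖ ≤ ‖x - p‖) (hs0 : 0 ≤ s) (hs1 : s < 1) :
    α * ‖(e + s • (x - e)) - e‖ < ‖(e + s • (x - e)) - p‖ := by
  rcases eq_or_ne x e with rfl | hxe
  · simpa [sub_eq_zero, eq_comm] using hpe
  have hd : 0 < ‖x - e‖ := norm_sub_pos_iff.mpr hxe
  have hgap : 0 < (α - 1) * (1 - s) * ‖x - e‖ := by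
    have := sub_pos.mpr hα
    have := sub_pos.mpr hs1
    positivity
  rw [norm_homothety_sub_center hs0]
  linarith [norm_sub_sub_mul_le_norm_homothety_sub (p := p) (e := e) (x := x) hs1.le]

end Apollonius

/-- For `α > 1`, `x_p ≠ x_e` and `x` in the closure of the Apollonius region
(`‖x − x_p‖ ≥ α‖x − x_e‖`), every point `x' = x_e + s·(x − x_e)` with `s ∈ [0, 1)` lies in
the open Apollonius region: `‖x' − x_p‖ > α‖x' − x_e‖`. -/
theorem stmt8 (α : ℝ) (hα : 1 < α) (x_p x_e x : EuclideanSpace ℝ (Fin 2))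
    (hne : x_p ≠ x_e) (hx : α * ‖x - x_e‖ ≤ ‖x - x_p‖)
    (s : ℝ) (hs : s ∈ Set.Ico (0:ℝ) 1) :
    α * ‖(x_e + s • (x - x_e)) - x_e‖ < ‖(x_e + s • (x - x_e)) - x_p‖ :=
  mul_norm_homothety_sub_lt hα hne hx hs.1 hs.2
end

section
/- Let α > 1 and let x_p, x_e, x ∈ ℝ² with ‖x‖ + ‖x_p‖ ≥ α·‖x − x_e‖ (i.e. x lies in the closure of C(x_p, x_e)). Then every point x' = x_e + s·(x − x_e) with s ∈ [0, 1) and x' ≠ x satisfies ‖x'‖ + ‖x_p‖ > α·‖x' − x_e‖. -/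
/-! Moving from `x` a distance `δ` straight towards the focus `x_e` lowers `α‖· − x_e‖` by `αδ`
but, by the triangle inequality, lowers `‖·‖` by at most `δ`. Hence the oval's defining
inequality gains the margin `(α − 1)δ > 0`. -/

open AffineMap

section

variable {E : Type*} [NormedAddCommGroup E] [NormedSpace ℝ E]

theorem mul_norm_lineMap_sub_sub_norm_le (α : ℝ) {s : ℝ} (hs0 : 0 ≤ s) (hs1 : s ≤ 1) (e x : E) :
    α * ‖lineMap e x s - e‖ - ‖lineMap e x s‖
      ≤ α * ‖x - e‖ - ‖x‖ - (α - 1) * ((1 - s) * ‖x - e‖) := by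
  have h_left : ‖lineMap e x s - e‖ = s * ‖x - e‖ := by
    rw [← dist_eq_norm, dist_lineMap_left, Real.norm_of_nonneg hs0, dist_comm, dist_eq_norm]
  have h_right : ‖x - lineMap e x s‖ = (1 - s) * ‖x - e‖ := by
    rw [← dist_eq_norm, dist_comm, dist_lineMap_right, Real.norm_of_nonneg (sub_nonneg.2 hs1),
      dist_comm, dist_eq_norm]
  have h_tri := norm_sub_norm_le x (lineMap e x s)
  rw [h_right] at h_tri
  rw [h_left]
  linarith

theorem mul_norm_lineMap_sub_lt {α c s : ℝ} (hα : 1 < α) {e x : E}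
    (hx : α * ‖x - e‖ ≤ ‖x‖ + c) (hs : s ∈ Set.Ico (0 : ℝ) 1) (hxe : x ≠ e) :
    α * ‖lineMap e x s - e‖ < ‖lineMap e x s‖ + c := by
  have h_gain : 0 < (α - 1) * ((1 - s) * ‖x - e‖) :=
    mul_pos (sub_pos.2 hα) (mul_pos (sub_pos.2 hs.2) (norm_pos_iff.2 (sub_ne_zero.2 hxe)))
  linarith [mul_norm_lineMap_sub_sub_norm_le α hs.1 hs.2.le e x]

end

/-- For `α > 1` and `x` in the closure of the second-type Cartesian oval region
(`‖x‖ + ‖x_p‖ ≥ α‖x − x_e‖`), every point `x' = x_e + s·(x − x_e)` with `s ∈ [0, 1)` and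
`x' ≠ x` lies in the open region: `‖x'‖ + ‖x_p‖ > α‖x' − x_e‖`. -/
theorem stmt9 (α : ℝ) (hα : 1 < α) (x_p x_e x : EuclideanSpace ℝ (Fin 2))
    (hx : α * ‖x - x_e‖ ≤ ‖x‖ + ‖x_p‖)
    (s : ℝ) (hs : s ∈ Set.Ico (0:ℝ) 1) (hne : x_e + s • (x - x_e) ≠ x) :
    α * ‖(x_e + s • (x - x_e)) - x_e‖ < ‖x_e + s • (x - x_e)‖ + ‖x_p‖ := by
  have hxe : x ≠ x_e := by
    rintro rfl
    simp at hne
  have h_lineMap : x_e + s • (x - x_e) = lineMap x_e x s := by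
    rw [lineMap_apply_module', add_comm]
  rw [h_lineMap]
  exact mul_norm_lineMap_sub_lt hα hx hs hxe
end

section
/- Let α > 1 and let x_p, x_e, x₁ ∈ ℝ² with x_p ≠ x_e and ‖x₁ − x_p‖ ≥ α·‖x₁ − x_e‖. Then every point x₂ = x_e + s·(x₁ − x_e) with s ∈ [0, 1) satisfies ‖x₂‖ + ‖x_p‖ > α·‖x₂ − x_e‖. In particular, on a ray emanating from x_e there is no point of the Cartesian oval {y : ‖y‖ + ‖x_p‖ = α·‖y − x_e‖} lying strictly between x_e and a point of the closed Apollonius region {y : ‖y − x_p‖ ≥ α·‖y − x_e‖}. -/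
/-!
Along a ray from `x_e`, the distance to `x_e` grows at unit rate while the distance to `x_p` can
shrink at most at unit rate. Since `α > 1`, walking back from a point of the closed Apollonius
region `{y : α‖y - x_e‖ ≤ ‖y - x_p‖}` towards `x_e` lands strictly inside it, and
`‖y - x_p‖ ≤ ‖y‖ + ‖x_p‖` passes from the Apollonius circle to the Cartesian oval.
-/

open AffineMap

theorem mul_dist_lineMap_lt_dist {V P : Type*} [NormedAddCommGroup V] [NormedSpace ℝ V]
    [MetricSpace P] [NormedAddTorsor V P] {α : ℝ} (hα : 1 < α) {p e x : P} (hne : p ≠ e)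
    (hx : α * dist x e ≤ dist x p) {s : ℝ} (hs : s ∈ Set.Ico (0 : ℝ) 1) :
    α * dist (lineMap e x s) e < dist (lineMap e x s) p := by
  obtain ⟨hs0, hs1⟩ := hs
  rcases eq_or_ne x e with rfl | hxe
  · simpa [lineMap_same_apply] using dist_pos.mpr hne.symm
  have hd : 0 < dist x e := dist_pos.mpr hxe
  have h_left : dist (lineMap e x s) e = s * dist x e := by
    rw [dist_lineMap_left, Real.norm_of_nonneg hs0, dist_comm]
  have h_right : dist x (lineMap e x s) = (1 - s) * dist x e := by
    rw [dist_comm, dist_lineMap_right, Real.norm_of_nonneg (by linarith), dist_comm]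
  have h_gap : 0 < (α - 1) * (1 - s) * dist x e :=
    mul_pos (mul_pos (by linarith) (by linarith)) hd
  calc α * dist (lineMap e x s) e
      < α * dist x e - (1 - s) * dist x e := by rw [h_left]; linarith
    _ ≤ dist x p - dist x (lineMap e x s) := by rw [h_right]; linarith
    _ ≤ dist (lineMap e x s) p := by linarith [dist_triangle x (lineMap e x s) p]

/-- For `α > 1`, `x_p ≠ x_e` and `‖x₁ − x_p‖ ≥ α‖x₁ − x_e‖`, every point
`x₂ = x_e + s·(x₁ − x_e)` with `s ∈ [0, 1)` satisfies `‖x₂‖ + ‖x_p‖ > α‖x₂ − x_e‖`; hence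
no point of the Cartesian oval `{y : ‖y‖ + ‖x_p‖ = α‖y − x_e‖}` lies strictly between `x_e`
and a point of the closed Apollonius region on a ray emanating from `x_e`. -/
theorem stmt10 (α : ℝ) (hα : 1 < α) (x_p x_e x₁ : EuclideanSpace ℝ (Fin 2))
    (hne : x_p ≠ x_e) (hx : α * ‖x₁ - x_e‖ ≤ ‖x₁ - x_p‖)
    (s : ℝ) (hs : s ∈ Set.Ico (0:ℝ) 1) :
    α * ‖(x_e + s • (x₁ - x_e)) - x_e‖ < ‖x_e + s • (x₁ - x_e)‖ + ‖x_p‖ := by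
  have h_line : x_e + s • (x₁ - x_e) = lineMap x_e x₁ s := by
    rw [lineMap_apply_module', add_comm]
  rw [h_line]
  simp only [← dist_eq_norm] at hx ⊢
  calc α * dist (lineMap x_e x₁ s) x_e
      < dist (lineMap x_e x₁ s) x_p := mul_dist_lineMap_lt_dist hα hne hx hs
    _ ≤ ‖lineMap x_e x₁ s‖ + ‖x_p‖ := by rw [dist_eq_norm]; exact norm_sub_le _ _
end

section
/- Let α > 1 and x_p, x_e, x ∈ ℝ² with x_p ≠ x_e and ‖x − x_p‖ = α·‖x − x_e‖. Then ⟨x_e − x_p, x − x_p⟩ ≥ √(1 − 1/α²)·‖x_e − x_p‖·‖x − x_p‖ > 0; in other words, the angle at x_p between the direction to x and the direction to x_e is acute, with sine at most 1/α. -/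
open scoped RealInnerProductSpace

/-! Put `u = x_e - x_p` and `v = x - x_p`, so that `x - x_e = v - u` and the Apollonius condition
reads `‖v - u‖ = ‖v‖ / α`. Expanding `‖v - u‖²` gives
`2⟪u, v⟫ = ‖u‖² + (1 - 1/α²)‖v‖²`, and AM-GM bounds the right-hand side below by
`2√(1 - 1/α²)‖u‖‖v‖`. -/

theorem two_mul_sqrt_mul_le_sq_add_mul_sq {c : ℝ} (hc : 0 ≤ c) (a b : ℝ) :
    2 * (√c * (a * b)) ≤ a ^ 2 + c * b ^ 2 := by
  have := two_mul_le_add_sq a (√c * b)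
  rw [mul_pow, Real.sq_sqrt hc] at this
  linarith

theorem sqrt_one_sub_sq_mul_norm_mul_norm_le_inner {E : Type*} [NormedAddCommGroup E]
    [InnerProductSpace ℝ E] {u v : E} {k : ℝ} (hk₀ : 0 ≤ k) (hk₁ : k ≤ 1)
    (h : ‖v - u‖ ≤ k * ‖v‖) :
    √(1 - k ^ 2) * (‖u‖ * ‖v‖) ≤ ⟪u, v⟫ := by
  have hsq : ‖v - u‖ ^ 2 ≤ k ^ 2 * ‖v‖ ^ 2 := by
    rw [← mul_pow]; exact pow_le_pow_left₀ (norm_nonneg _) h 2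
  have hexpand : ‖v - u‖ ^ 2 = ‖v‖ ^ 2 - 2 * ⟪v, u⟫ + ‖u‖ ^ 2 := norm_sub_sq_real v u
  have hamgm := two_mul_sqrt_mul_le_sq_add_mul_sq (c := 1 - k ^ 2) (by nlinarith) ‖u‖ ‖v‖
  rw [real_inner_comm] at hexpand
  nlinarith

/-- For `α > 1`, `x_p ≠ x_e` and `x` on the Apollonius circle
(`‖x − x_p‖ = α‖x − x_e‖`), one has
`⟨x_e − x_p, x − x_p⟩ ≥ √(1 − 1/α²)·‖x_e − x_p‖·‖x − x_p‖ > 0`: the angle at `x_p` between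
the directions to `x` and to `x_e` is acute, with sine at most `1/α`. -/
theorem stmt13 (α : ℝ) (hα : 1 < α) (x_p x_e x : EuclideanSpace ℝ (Fin 2))
    (hne : x_p ≠ x_e) (hx : ‖x - x_p‖ = α * ‖x - x_e‖) :
    Real.sqrt (1 - 1 / α ^ 2) * (‖x_e - x_p‖ * ‖x - x_p‖) ≤ ⟪x_e - x_p, x - x_p⟫ ∧
    0 < Real.sqrt (1 - 1 / α ^ 2) * (‖x_e - x_p‖ * ‖x - x_p‖) := by
  have hα₀ : 0 < α := one_pos.trans hα
  have hxe : ‖x - x_e‖ = α⁻¹ * ‖x - x_p‖ := by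
    rw [hx, inv_mul_cancel_left₀ hα₀.ne']
  have hxpe : 0 < ‖x_e - x_p‖ := norm_pos_iff.2 (sub_ne_zero.2 hne.symm)
  have hxp : 0 < ‖x - x_p‖ := by
    have htri := norm_sub_le_norm_sub_add_norm_sub x_e x x_p
    rw [norm_sub_rev x_e x, hxe] at htri
    by_contra! h
    nlinarith [norm_nonneg (x - x_p), inv_pos.2 hα₀]
  rw [one_div, ← inv_pow]
  refine ⟨sqrt_one_sub_sq_mul_norm_mul_norm_le_inner (inv_nonneg.2 hα₀.le)
    (inv_le_one_of_one_le₀ hα.le) (by rw [sub_sub_sub_cancel_right, hxe]), ?_⟩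
  have hk : 0 < 1 - (α⁻¹) ^ 2 := by
    rw [sub_pos]; exact pow_lt_one₀ (by positivity) (inv_lt_one_of_one_lt₀ hα) two_ne_zero
  exact mul_pos (Real.sqrt_pos.2 hk) (mul_pos hxpe hxp)
end
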